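/- Let H1 and H2 be connected finite simple graphs on disjoint vertex sets, let v1 ∈ V(H1) and v2 ∈ V(H2), and let G be the graph obtained from H1 and H2 by identifying v1 and v2 as a single vertex v. Then: (i) for all i, j ∈ V(H1), f_G(i,j) = τ(H2)·f_{H1}(i,j) (where v1 is identified with v); (ii) for all i, j ∈ V(H2), f_G(i,j) = τ(H1)·f_{H2}(i,j); and (iii) for all i ∈ V(H1)∖{v1} and j ∈ V(H2)∖{v2}, f_G(i,j) = τ(H2)·f_{H1}(i,v1) + τ(H1)·f_{H2}(v2,j). -/

import Mathlib

open SimpleGraph Filter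

namespace Braess

universe u

variable {V : Type*}

/-- The number of spanning trees of `G`. -/
noncomputable def tau (G : SimpleGraph V) : ℕ :=
  Nat.card {H : SimpleGraph V // H ≤ G ∧ H.IsTree}

/-- `H` is a 2-forest (spanning forest with exactly two components) of `G`. -/
def IsTwoForest (G H : SimpleGraph V) : Prop :=
  H ≤ G ∧ H.IsAcyclic ∧ Nat.card H.ConnectedComponent = 2

/-- `f_G(i,j)`: the number of 2-forests of `G` with `i` and `j` in different components. -/
noncomputable def fsep (G : SimpleGraph V) (i j : V) : ℕ :=
  Nat.card {H : SimpleGraph V // IsTwoForest G H ∧ ¬ H.Reachable i j}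

/-- `q_{i,j}`: the number of 2-forests of `G` with `i` and `j` in one component and `v`
in the other. -/
noncomputable def qEntry (G : SimpleGraph V) (v i j : V) : ℕ :=
  Nat.card {H : SimpleGraph V // IsTwoForest G H ∧ H.Reachable i j ∧ ¬ H.Reachable i v}

/-- Degree of a vertex. -/
noncomputable def deg (G : SimpleGraph V) (i : V) : ℕ :=
  Nat.card (G.neighborSet i)

/-- Number of edges of `G`. -/
noncomputable def edgeCount (G : SimpleGraph V) : ℕ :=
  Nat.card G.edgeSet

/-- `d_G^T F_G d_G`. -/
noncomputable def dFd (G : SimpleGraph V) : ℚ :=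
  ∑ᶠ i, ∑ᶠ j, (deg G i : ℚ) * (fsep G i j : ℚ) * (deg G j : ℚ)

/-- `d_G^T f^v_G`. -/
noncomputable def dfv (G : SimpleGraph V) (v : V) : ℚ :=
  ∑ᶠ i, (deg G i : ℚ) * (fsep G i v : ℚ)

/-- `d_G^T Q_{G,v} d_G`. -/
noncomputable def dQd (G : SimpleGraph V) (v : V) : ℚ :=
  ∑ᶠ i, ∑ᶠ j, (deg G i : ℚ) * (qEntry G v i j : ℚ) * (deg G j : ℚ)

/-- `φ_G(v) = d_G^T (2 f^v_G 𝟙^T − F_G) d_G`. -/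
noncomputable def phi (G : SimpleGraph V) (v : V) : ℚ :=
  ∑ᶠ i, ∑ᶠ j, (deg G i : ℚ) * (2 * (fsep G i v : ℚ) - (fsep G i j : ℚ)) * (deg G j : ℚ)

/-- Kemeny's constant, via the combinatorial formula. -/
noncomputable def kemeny (G : SimpleGraph V) : ℚ :=
  dFd G / (4 * (edgeCount G : ℚ) * (tau G : ℚ))

/-- Eccentricity of a vertex. -/
noncomputable def ecc (G : SimpleGraph V) (v : V) : ℕ :=
  sSup (Set.range (G.dist v))

/-- The graph `G̃(v,k₁,k₂)`, obtained from `G` by attaching at `v` two pendent paths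
with `k₁` and `k₂` new vertices respectively. -/
def attach (G : SimpleGraph V) (v : V) (k₁ k₂ : ℕ) :
    SimpleGraph (V ⊕ (Fin k₁ ⊕ Fin k₂)) where
  Adj x y :=
    match x, y with
    | .inl a, .inl b => G.Adj a b
    | .inl a, .inr (.inl i) => a = v ∧ (i : ℕ) = 0
    | .inl a, .inr (.inr i) => a = v ∧ (i : ℕ) = 0
    | .inr (.inl i), .inl b => b = v ∧ (i : ℕ) = 0
    | .inr (.inr i), .inl b => b = v ∧ (i : ℕ) = 0
    | .inr (.inl i), .inr (.inl j) => (i : ℕ) + 1 = (j : ℕ) ∨ (j : ℕ) + 1 = (i : ℕ)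
    | .inr (.inr i), .inr (.inr j) => (i : ℕ) + 1 = (j : ℕ) ∨ (j : ℕ) + 1 = (i : ℕ)
    | .inr (.inl _), .inr (.inr _) => False
    | .inr (.inr _), .inr (.inl _) => False
  symm := by
    constructor
    rintro (a | (i | i)) (b | (j | j)) h
    · exact G.adj_symm h
    · exact h
    · exact h
    · exact h
    · exact h.symm
    · exact h.elim
    · exact h
    · exact h.elim
    · exact h.symm
  loopless := by
    constructor
    rintro (a | (i | i)) h
    · exact G.irrefl h
    · omega
    · omega

/-- The far endpoint of the first attached path (it is `v` itself when `k₁ = 0`). -/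
def farEnd₁ (v : V) (k₁ k₂ : ℕ) : V ⊕ (Fin k₁ ⊕ Fin k₂) :=
  if h : 0 < k₁ then .inr (.inl ⟨k₁ - 1, by omega⟩) else .inl v

/-- The far endpoint of the second attached path (it is `v` itself when `k₂ = 0`). -/
def farEnd₂ (v : V) (k₁ k₂ : ℕ) : V ⊕ (Fin k₁ ⊕ Fin k₂) :=
  if h : 0 < k₂ then .inr (.inr ⟨k₂ - 1, by omega⟩) else .inl v

/-- The graph `Ĝ(v,k₁,k₂)`: `G̃(v,k₁,k₂)` together with the extra edge joining the far
endpoints of the two attached paths. -/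
def attachEdge (G : SimpleGraph V) (v : V) (k₁ k₂ : ℕ) :
    SimpleGraph (V ⊕ (Fin k₁ ⊕ Fin k₂)) :=
  attach G v k₁ k₂ ⊔ fromEdgeSet {s(farEnd₁ v k₁ k₂, farEnd₂ v k₁ k₂)}

/-- `G` is `(v,k₁,k₂)`-paradoxical. -/
def IsParadoxical (G : SimpleGraph V) (v : V) (k₁ k₂ : ℕ) : Prop :=
  kemeny (attach G v k₁ k₂) < kemeny (attachEdge G v k₁ k₂)

/-- `φ₁(k₁,k₂)`. -/
noncomputable def kphi₁ (k₁ k₂ : ℕ) : ℚ :=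
  -(2 / 3) * ((k₁ : ℚ) + k₂) * ((k₁ : ℚ) + k₂ - 1) + 2 * k₁ * k₂

/-- `φ₂(k₁,k₂)`. -/
noncomputable def kphi₂ (k₁ k₂ : ℕ) : ℚ :=
  -((k₁ : ℚ) + k₂) * (5 * ((k₁ : ℚ) + k₂) ^ 2 - ((k₁ : ℚ) + k₂) - 1)
    + 12 * k₁ * k₂ * ((k₁ : ℚ) + k₂ + 1)

/-- `φ₃(k₁,k₂)`. -/
noncomputable def kphi₃ (k₁ k₂ : ℕ) : ℚ :=
  -((k₁ : ℚ) + k₂ + 1) * ((k₁ : ℚ) + k₂) * ((k₁ : ℚ) + k₂ - 1) ^ 2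

/-- `Φ_G(v,k₁,k₂)`, with `k = k₁ + k₂ + 1`. -/
noncomputable def Phi (G : SimpleGraph V) (v : V) (k₁ k₂ : ℕ) : ℚ :=
  ((k₁ : ℚ) + k₂ + 1) * phi G v
    + 4 * (edgeCount G : ℚ) ^ 2 * (tau G : ℚ) * ((k₁ : ℚ) + k₂ + 1) * kphi₁ k₁ k₂
    + (2 * (edgeCount G : ℚ) * (tau G : ℚ) * ((k₁ : ℚ) + k₂ + 1) / 3) * kphi₂ k₁ k₂
    + (2 * (tau G : ℚ) * ((k₁ : ℚ) + k₂ + 1) / 3) * kphi₃ k₁ k₂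

/-- A sequence of graphs with specified vertices is asymptotically paradoxical. -/
def AsympParadoxical {W : ℕ → Type u} (G : ∀ n, SimpleGraph (W n)) (v : ∀ n, W n) : Prop :=
  ∀ l₁ l₂ : ℕ, 2 ≤ l₁ + l₂ → ∃ N, ∀ n ≥ N, IsParadoxical (G n) (v n) l₁ l₂

section Glue

variable {V₁ V₂ : Type*}

/-- The graph obtained from `H₁` and `H₂` by identifying `v₁ ∈ V(H₁)` and `v₂ ∈ V(H₂)` as a
single vertex (represented by `Sum.inl v₁`). -/
def glue (H₁ : SimpleGraph V₁) (H₂ : SimpleGraph V₂) (v₁ : V₁) (v₂ : V₂) :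
    SimpleGraph (V₁ ⊕ {x : V₂ // x ≠ v₂}) where
  Adj x y :=
    match x, y with
    | .inl a, .inl b => H₁.Adj a b
    | .inl a, .inr b => a = v₁ ∧ H₂.Adj v₂ b.1
    | .inr a, .inl b => b = v₁ ∧ H₂.Adj v₂ a.1
    | .inr a, .inr b => H₂.Adj a.1 b.1
  symm := by
    constructor
    rintro (a | a) (b | b) h
    · exact H₁.adj_symm h
    · exact h
    · exact h
    · exact H₂.adj_symm h
  loopless := by
    constructor
    rintro (a | a) h
    · exact H₁.irrefl h
    · exact H₂.irrefl h

/-- The canonical map from `V₂` to the vertex set of the glued graph. -/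
def glueRight [DecidableEq V₂] (v₁ : V₁) (v₂ : V₂) (x : V₂) : V₁ ⊕ {y : V₂ // y ≠ v₂} :=
  if h : x = v₂ then .inl v₁ else .inr ⟨x, h⟩

end Glue

section MultiGlue

variable {ι : Type*} {W : ι → Type*} {V₀ : Type*}

/-- The graph obtained from the family `H i` and `G` by identifying all the vertices `w i`
and `v` as a single vertex (represented by `Sum.inl v`). -/
def multiGlue (H : ∀ i, SimpleGraph (W i)) (w : ∀ i, W i)
    (G : SimpleGraph V₀) (v : V₀) :
    SimpleGraph (V₀ ⊕ Σ i, {x : W i // x ≠ w i}) where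
  Adj x y :=
    match x, y with
    | .inl a, .inl b => G.Adj a b
    | .inl a, .inr ⟨i, b⟩ => a = v ∧ (H i).Adj (w i) b.1
    | .inr ⟨i, a⟩, .inl b => b = v ∧ (H i).Adj (w i) a.1
    | .inr ⟨i, a⟩, .inr ⟨j, b⟩ => ∃ h : i = j, (H j).Adj (h ▸ a).1 b.1
  symm := by
    constructor
    rintro (a | ⟨i, a⟩) (b | ⟨j, b⟩) h
    · exact G.adj_symm h
    · exact h
    · exact h
    · obtain ⟨rfl, h⟩ := h
      exact ⟨rfl, (H i).adj_symm h⟩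
  loopless := by
    constructor
    rintro (a | ⟨i, a⟩) h
    · exact G.irrefl h
    · obtain ⟨h', h⟩ := h
      exact (H i).irrefl h

end MultiGlue

/-- The broom `𝓑_{n,k}`: a path on the `k` vertices `0, 1, …, k−1` together with `n − k`
pendent vertices (the vertices `k, …, n−1`) all adjacent to the vertex `0`. -/
def broomGraph (n k : ℕ) : SimpleGraph (Fin n) where
  Adj i j :=
    ((i : ℕ) + 1 = (j : ℕ) ∧ (j : ℕ) < k) ∨ ((j : ℕ) + 1 = (i : ℕ) ∧ (i : ℕ) < k) ∨
      ((i : ℕ) = 0 ∧ k ≤ (j : ℕ) ∧ i ≠ j) ∨ ((j : ℕ) = 0 ∧ k ≤ (i : ℕ) ∧ i ≠ j)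
  symm := by
    constructor
    intro i j h
    tauto
  loopless := by
    constructor
    rintro i (⟨h, -⟩ | ⟨h, -⟩ | ⟨-, -, h⟩ | ⟨-, -, h⟩)
    · omega
    · omega
    · exact h rfl
    · exact h rfl

section Branch

variable (G : SimpleGraph V) (v : V)

/-- The vertex set of the branch of `G` at `v` corresponding to the connected component `c`
of `G − v`. -/
def branchSet (c : (G.induce {x : V | x ≠ v}).ConnectedComponent) : Set V :=
  insert v {x : V | ∃ h : x ≠ v,
    (G.induce {x : V | x ≠ v}).connectedComponentMk ⟨x, h⟩ = c}

/-- The vertex set of the complementary part `G'_c`: everything outside the branch at `c`,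
together with `v`. -/
def cobranchSet (c : (G.induce {x : V | x ≠ v}).ConnectedComponent) : Set V :=
  insert v {x : V | ∃ h : x ≠ v,
    (G.induce {x : V | x ≠ v}).connectedComponentMk ⟨x, h⟩ ≠ c}

end Branch

section Sequence

/-- `Tnew` is obtained from `Told` by adding one new pendent vertex (the last vertex). -/
def AddPendentStep {n : ℕ} (Told : SimpleGraph (Fin (n + 1)))
    (Tnew : SimpleGraph (Fin (n + 2))) : Prop :=
  (∀ a b : Fin (n + 1), Tnew.Adj a.castSucc b.castSucc ↔ Told.Adj a b) ∧
    ∃ u : Fin (n + 1), ∀ x : Fin (n + 1), Tnew.Adj (Fin.last (n + 1)) x.castSucc ↔ x = u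

/-- `Tnew` is obtained from `Told` by subdividing one edge, the new (last) vertex being
placed in the middle of it. -/
def SubdivideStep {n : ℕ} (Told : SimpleGraph (Fin (n + 1)))
    (Tnew : SimpleGraph (Fin (n + 2))) : Prop :=
  ∃ a b : Fin (n + 1), Told.Adj a b ∧
    (∀ x y : Fin (n + 1), Tnew.Adj x.castSucc y.castSucc ↔ (Told.Adj x y ∧ s(x, y) ≠ s(a, b))) ∧
    (∀ x : Fin (n + 1), Tnew.Adj (Fin.last (n + 1)) x.castSucc ↔ (x = a ∨ x = b))

/-- The vertex set of the branch of `T` at the vertex `0` containing the vertex `w`. -/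
def branchSetAt {m : ℕ} (T : SimpleGraph (Fin (m + 1))) (w : Fin (m + 1)) :
    Set (Fin (m + 1)) :=
  insert 0 {y : Fin (m + 1) | ∃ (hy : y ≠ 0) (hw : w ≠ 0),
    (T.induce {z : Fin (m + 1) | z ≠ 0}).Reachable ⟨y, hy⟩ ⟨w, hw⟩}

/-- The eccentricity of the vertex `0` in the branch of `T` at `0` containing `w`. -/
noncomputable def branchEcc {m : ℕ} (T : SimpleGraph (Fin (m + 1))) (w : Fin (m + 1)) : ℕ :=
  ecc (T.induce (branchSetAt T w)) ⟨0, Set.mem_insert _ _⟩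

/-- `f = Θ(g)` (big Theta) for `ℕ`-valued sequences. -/
def IsBigTheta (f g : ℕ → ℕ) : Prop :=
  ∃ c₁ c₂ : ℚ, 0 < c₁ ∧ 0 < c₂ ∧
    ∃ N, ∀ n ≥ N, c₁ * (g n : ℚ) ≤ (f n : ℚ) ∧ (f n : ℚ) ≤ c₂ * (g n : ℚ)

/-- `β_n`: the number of branches of `T n` at the vertex `0` whose eccentricity function (in
later members of the sequence, under the consistent indexing that tracks each branch by the
vertices it contains) is `Θ` of the eccentricity of `0`. -/
noncomputable def beta (T : ∀ n : ℕ, SimpleGraph (Fin (n + 1))) (n : ℕ) : ℕ :=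
  Nat.card {c : ((T n).induce {z : Fin (n + 1) | z ≠ 0}).ConnectedComponent //
    ∃ (x : Fin (n + 1)) (hx : x ≠ 0),
      ((T n).induce {z : Fin (n + 1) | z ≠ 0}).connectedComponentMk ⟨x, hx⟩ = c ∧
      IsBigTheta
        (fun m => if h : n ≤ m then branchEcc (T m) (Fin.castLE (by omega) x) else 0)
        (fun m => ecc (T m) 0)}

end Sequence

/-!
Every subgraph of `glue H₁ H₂ v₁ v₂` is `glue F₁ F₂ v₁ v₂` for unique `F₁ ≤ H₁` and `F₂ ≤ H₂`.
Gluing at one vertex creates no cycle and merges exactly one pair of components, so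
`glue F₁ F₂` is acyclic iff `F₁` and `F₂` are, and `c(glue F₁ F₂) = c(F₁) + c(F₂) - 1`. Hence the
2-forests of the glued graph are a 2-forest of one side glued to a spanning tree of the other.
Reachability in the glued graph is read off through the retractions collapsing one side onto the
cut vertex: two vertices of the same side are separated iff they are separated on that side (which
is then the 2-forest side), while `i` on the first side and `j` on the second are separated iff
`i` is separated from `v₁` (first side a 2-forest) or `j` from `v₂` (second side a 2-forest).
-/

section GraphFacts

variable {W : Type*} {G : SimpleGraph V} {G' : SimpleGraph W}

theorem _root_.SimpleGraph.Reachable.map_of_forall_adj (f : V → W)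
    (hf : ∀ ⦃a b⦄, G.Adj a b → G'.Reachable (f a) (f b)) {x y : V} (h : G.Reachable x y) :
    G'.Reachable (f x) (f y) := by
  rw [reachable_iff_reflTransGen] at h ⊢
  exact Relation.ReflTransGen.lift' f
    (fun a b hab => (reachable_iff_reflTransGen _ _).1 (hf hab)) _ _ h

/-- `π` retracts `G'` onto its copy `f(G)` of `G`, collapsing every edge of `G'` outside it. -/
theorem _root_.SimpleGraph.Reachable.of_retraction (f : G ↪g G') (π : W → V)
    (hcollapse : ∀ ⦃x y⦄, G'.Adj x y → π x = π y ∨ x = f (π x) ∧ y = f (π y))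
    {x y : W} (h : G'.Reachable x y) : G.Reachable (π x) (π y) := by
  refine h.map_of_forall_adj π fun x y hxy => ?_
  obtain hxy' | ⟨hx, hy⟩ := hcollapse hxy
  · exact hxy' ▸ Reachable.rfl
  · rw [hx, hy, f.map_adj_iff] at hxy
    exact hxy.reachable

theorem _root_.SimpleGraph.IsBridge.map_of_retraction (f : G ↪g G') (π : W → V)
    (hπ : ∀ v, π (f v) = v)
    (hcollapse : ∀ ⦃x y⦄, G'.Adj x y → π x = π y ∨ x = f (π x) ∧ y = f (π y))
    {a b : V} (h : G.IsBridge s(a, b)) : G'.IsBridge s(f a, f b) := by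
  rw [isBridge_iff] at h ⊢
  refine fun hr => h ?_
  have hedge : ∀ ⦃x y⦄, (G'.deleteEdges {s(f a, f b)}).Adj x y →
      (G.deleteEdges {s(a, b)}).Reachable (π x) (π y) := by
    intro x y hxy
    rw [deleteEdges_adj, Set.mem_singleton_iff] at hxy
    obtain hxy' | ⟨hx, hy⟩ := hcollapse hxy.1
    · exact hxy' ▸ Reachable.rfl
    refine Adj.reachable ((deleteEdges_adj ..).2 ⟨f.map_adj_iff.1 ?_, fun he => hxy.2 ?_⟩)
    · rw [← hx, ← hy]; exact hxy.1
    · rw [hx, hy, ← Sym2.map_mk, Set.mem_singleton_iff.1 he, Sym2.map_mk]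
  simpa only [hπ] using hr.map_of_forall_adj π hedge

theorem _root_.SimpleGraph.connected_iff_card_connectedComponent_eq_one [Finite V] :
    G.Connected ↔ Nat.card G.ConnectedComponent = 1 := by
  rw [connected_iff, Nat.card_eq_one_iff_unique]
  refine and_congr ⟨fun h => h.subsingleton_connectedComponent, fun h u v => ?_⟩
    ⟨fun ⟨v⟩ => ⟨G.connectedComponentMk v⟩, fun ⟨c⟩ => ⟨c.out⟩⟩
  exact ConnectedComponent.exact (Subsingleton.elim _ _)

theorem _root_.SimpleGraph.isTree_iff_isAcyclic_and_card_connectedComponent_eq_one [Finite V] :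
    G.IsTree ↔ G.IsAcyclic ∧ Nat.card G.ConnectedComponent = 1 := by
  rw [← connected_iff_card_connectedComponent_eq_one, isTree_iff, and_comm]

end GraphFacts

section TwoForest

variable {G F T : SimpleGraph V}

def spanningTrees (G : SimpleGraph V) : Set (SimpleGraph V) := {T | T ≤ G ∧ T.IsTree}

def separatingTwoForests (G : SimpleGraph V) (i j : V) : Set (SimpleGraph V) :=
  {F | IsTwoForest G F ∧ ¬F.Reachable i j}

theorem tau_eq_ncard : tau G = (spanningTrees G).ncard := rfl

theorem fsep_eq_ncard (i j : V) : fsep G i j = (separatingTwoForests G i j).ncard := rfl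

theorem reachable_of_mem_spanningTrees (hT : T ∈ spanningTrees G) (i j : V) : T.Reachable i j :=
  hT.2.connected.preconnected i j

theorem IsTwoForest.notMem_spanningTrees [Finite V] (hF : IsTwoForest G F) :
    F ∉ spanningTrees G := fun hT => by
  have := (isTree_iff_isAcyclic_and_card_connectedComponent_eq_one.1 hT.2).2
  have := hF.2.2
  omega

end TwoForest

section Glue

variable {V₁ V₂ : Type*} {F₁ H₁ : SimpleGraph V₁} {F₂ H₂ : SimpleGraph V₂} {v₁ : V₁} {v₂ : V₂}

@[simp] theorem glue_adj_inl_inl {a b : V₁} :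
    (glue F₁ F₂ v₁ v₂).Adj (.inl a) (.inl b) ↔ F₁.Adj a b := Iff.rfl

@[simp] theorem glue_adj_inl_inr {a : V₁} {b : {x : V₂ // x ≠ v₂}} :
    (glue F₁ F₂ v₁ v₂).Adj (.inl a) (.inr b) ↔ a = v₁ ∧ F₂.Adj v₂ b := Iff.rfl

@[simp] theorem glue_adj_inr_inl {a : {x : V₂ // x ≠ v₂}} {b : V₁} :
    (glue F₁ F₂ v₁ v₂).Adj (.inr a) (.inl b) ↔ b = v₁ ∧ F₂.Adj v₂ a := Iff.rfl

@[simp] theorem glue_adj_inr_inr {a b : {x : V₂ // x ≠ v₂}} :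
    (glue F₁ F₂ v₁ v₂).Adj (.inr a) (.inr b) ↔ F₂.Adj a b := Iff.rfl

def glueProjLeft (v₁ : V₁) (v₂ : V₂) : V₁ ⊕ {x : V₂ // x ≠ v₂} → V₁ :=
  Sum.elim id fun _ => v₁

def glueProjRight (v₂ : V₂) : V₁ ⊕ {x : V₂ // x ≠ v₂} → V₂ :=
  Sum.elim (fun _ => v₂) Subtype.val

@[simp] theorem glueProjLeft_inl (a : V₁) : glueProjLeft v₁ v₂ (.inl a) = a := rfl

@[simp] theorem glueProjRight_inl (a : V₁) : glueProjRight v₂ (.inl a : V₁ ⊕ {x // x ≠ v₂}) = v₂ :=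
  rfl

variable (F₁ F₂ v₁ v₂) in
def glueInl : F₁ ↪g glue F₁ F₂ v₁ v₂ where
  toFun := .inl
  inj' := Sum.inl_injective
  map_rel_iff' := Iff.rfl

theorem glue_adj_collapse_left ⦃x y : V₁ ⊕ {x : V₂ // x ≠ v₂}⦄
    (h : (glue F₁ F₂ v₁ v₂).Adj x y) :
    glueProjLeft v₁ v₂ x = glueProjLeft v₁ v₂ y ∨
      x = glueInl F₁ F₂ v₁ v₂ (glueProjLeft v₁ v₂ x) ∧
        y = glueInl F₁ F₂ v₁ v₂ (glueProjLeft v₁ v₂ y) := by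
  rcases x with a | a <;> rcases y with b | b
  · exact .inr ⟨rfl, rfl⟩
  · exact .inl h.1
  · exact .inl h.1.symm
  · exact .inl rfl

theorem glue_reachable_inl_inl {a b : V₁} :
    (glue F₁ F₂ v₁ v₂).Reachable (.inl a) (.inl b) ↔ F₁.Reachable a b :=
  ⟨Reachable.of_retraction (glueInl F₁ F₂ v₁ v₂) _ glue_adj_collapse_left,
    fun h => h.map (glueInl F₁ F₂ v₁ v₂).toHom⟩

section DecidableEq

variable [DecidableEq V₂]

@[simp] theorem glueRight_self : glueRight v₁ v₂ v₂ = .inl v₁ := dif_pos rfl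

@[simp] theorem glueRight_val (b : {x : V₂ // x ≠ v₂}) : glueRight v₁ v₂ b.1 = .inr b :=
  dif_neg b.2

@[simp] theorem glueProjRight_glueRight (b : V₂) :
    glueProjRight v₂ (glueRight v₁ v₂ b) = b := by
  unfold glueRight
  split_ifs with hb
  exacts [hb.symm, rfl]

@[simp] theorem glueProjLeft_glueRight (b : V₂) :
    glueProjLeft v₁ v₂ (glueRight v₁ v₂ b) = v₁ := by
  unfold glueRight
  split_ifs <;> rfl

@[simp] theorem glue_adj_glueRight {a b : V₂} :
    (glue F₁ F₂ v₁ v₂).Adj (glueRight v₁ v₂ a) (glueRight v₁ v₂ b) ↔ F₂.Adj a b := by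
  unfold glueRight
  split_ifs with ha hb hb <;> subst_vars <;> simp [adj_comm]

variable (F₁ F₂ v₁ v₂) in
def glueInr : F₂ ↪g glue F₁ F₂ v₁ v₂ where
  toFun := glueRight v₁ v₂
  inj' := Function.LeftInverse.injective (g := glueProjRight v₂) glueProjRight_glueRight
  map_rel_iff' := glue_adj_glueRight

theorem glue_adj_collapse_right ⦃x y : V₁ ⊕ {x : V₂ // x ≠ v₂}⦄
    (h : (glue F₁ F₂ v₁ v₂).Adj x y) :
    glueProjRight v₂ x = glueProjRight v₂ y ∨
      x = glueInr F₁ F₂ v₁ v₂ (glueProjRight v₂ x) ∧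
        y = glueInr F₁ F₂ v₁ v₂ (glueProjRight v₂ y) := by
  rcases x with a | a <;> rcases y with b | b
  · exact .inl rfl
  · exact .inr ⟨by simp [glueInr, glueProjRight, h.1], by simp [glueInr, glueProjRight]⟩
  · exact .inr ⟨by simp [glueInr, glueProjRight], by simp [glueInr, glueProjRight, h.1]⟩
  · exact .inr ⟨by simp [glueInr, glueProjRight], by simp [glueInr, glueProjRight]⟩

theorem glue_reachable_glueRight {a b : V₂} :
    (glue F₁ F₂ v₁ v₂).Reachable (glueRight v₁ v₂ a) (glueRight v₁ v₂ b) ↔ F₂.Reachable a b := by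
  refine ⟨fun h => ?_, fun h => h.map (glueInr F₁ F₂ v₁ v₂).toHom⟩
  simpa using h.of_retraction (glueInr F₁ F₂ v₁ v₂) _ glue_adj_collapse_right

theorem glue_reachable_inl_glueRight {a : V₁} {b : V₂} :
    (glue F₁ F₂ v₁ v₂).Reachable (.inl a) (glueRight v₁ v₂ b) ↔
      F₁.Reachable a v₁ ∧ F₂.Reachable v₂ b := by
  refine ⟨fun h => ⟨?_, ?_⟩, fun ⟨h₁, h₂⟩ => ?_⟩
  · simpa using h.of_retraction (glueInl F₁ F₂ v₁ v₂) _ glue_adj_collapse_left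
  · simpa using h.of_retraction (glueInr F₁ F₂ v₁ v₂) _ glue_adj_collapse_right
  · have h₂' := glue_reachable_glueRight (F₁ := F₁) (v₁ := v₁) (v₂ := v₂) |>.2 h₂
    rw [glueRight_self] at h₂'
    exact (glue_reachable_inl_inl.2 h₁).trans h₂'

end DecidableEq

theorem glue_reachable_inl_inr {a : V₁} {b : {x : V₂ // x ≠ v₂}} :
    (glue F₁ F₂ v₁ v₂).Reachable (.inl a) (.inr b) ↔ F₁.Reachable a v₁ ∧ F₂.Reachable v₂ b := by
  classical
  rw [← glueRight_val, glue_reachable_inl_glueRight]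

theorem glue_isAcyclic_iff : (glue F₁ F₂ v₁ v₂).IsAcyclic ↔ F₁.IsAcyclic ∧ F₂.IsAcyclic := by
  classical
  refine ⟨fun h => ⟨h.embedding (glueInl F₁ F₂ v₁ v₂), h.embedding (glueInr F₁ F₂ v₁ v₂)⟩,
    fun ⟨h₁, h₂⟩ => isAcyclic_iff_forall_adj_isBridge.2 ?_⟩
  have bridge₂ {a b : V₂} (hab : F₂.Adj a b) :
      (glue F₁ F₂ v₁ v₂).IsBridge s(glueRight v₁ v₂ a, glueRight v₁ v₂ b) :=
    isAcyclic_iff_forall_adj_isBridge.1 h₂ hab |>.map_of_retraction (glueInr F₁ F₂ v₁ v₂) _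
      glueProjRight_glueRight glue_adj_collapse_right
  rintro (a | a) (b | b) hab
  · exact isAcyclic_iff_forall_adj_isBridge.1 h₁ hab |>.map_of_retraction
      (glueInl F₁ F₂ v₁ v₂) _ (fun _ => rfl) glue_adj_collapse_left
  · obtain ⟨rfl, hab⟩ := hab
    simpa using bridge₂ hab
  · obtain ⟨rfl, hab⟩ := hab
    simpa using bridge₂ hab.symm
  · simpa using bridge₂ hab

open Classical in
noncomputable def glueConnectedComponentEquiv :
    F₁.ConnectedComponent ⊕ {c : F₂.ConnectedComponent // c ≠ F₂.connectedComponentMk v₂} ≃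
      (glue F₁ F₂ v₁ v₂).ConnectedComponent := by
  refine .ofBijective (Sum.elim (·.map (glueInl F₁ F₂ v₁ v₂).toHom)
    (·.1.map (glueInr F₁ F₂ v₁ v₂).toHom)) ⟨.sumElim ?_ ?_ ?_, ?_⟩
  · intro c d
    induction c, d using ConnectedComponent.ind₂ with | h a b => ?_
    simp [ConnectedComponent.eq, glueInl, glue_reachable_inl_inl]
  · rintro ⟨c, hc⟩ ⟨d, hd⟩
    induction c, d using ConnectedComponent.ind₂ with | h a b => ?_
    simp [ConnectedComponent.eq, glueInr, glue_reachable_glueRight]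
  · rintro c ⟨d, hd⟩
    induction c using ConnectedComponent.ind with | h a => ?_
    induction d using ConnectedComponent.ind with | h b => ?_
    simp [ConnectedComponent.eq, glueInl, glueInr, glue_reachable_inl_glueRight] at hd ⊢
    exact fun _ h => hd h.symm
  · intro c
    induction c using ConnectedComponent.ind with | h x => ?_
    rcases x with a | b
    · exact ⟨.inl (F₁.connectedComponentMk a), rfl⟩
    by_cases hb : F₂.Reachable v₂ b
    · refine ⟨.inl (F₁.connectedComponentMk v₁), ?_⟩
      simpa [ConnectedComponent.eq, glueInl, glue_reachable_inl_inr] using hb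
    · refine ⟨.inr ⟨F₂.connectedComponentMk b, fun h => hb (ConnectedComponent.exact h).symm⟩, ?_⟩
      simp [glueInr]

theorem glue_le_glue_iff : glue F₁ F₂ v₁ v₂ ≤ glue H₁ H₂ v₁ v₂ ↔ F₁ ≤ H₁ ∧ F₂ ≤ H₂ := by
  classical
  refine ⟨fun h => ⟨fun a b hab => ?_, fun a b hab => ?_⟩, fun ⟨h₁, h₂⟩ => ?_⟩
  · exact h (show (glue F₁ F₂ v₁ v₂).Adj (.inl a) (.inl b) from hab)
  · exact glue_adj_glueRight.1 (h (glue_adj_glueRight.2 hab))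
  · rintro (a | a) (b | b) hab
    exacts [h₁ hab, ⟨hab.1, h₂ hab.2⟩, ⟨hab.1, h₂ hab.2⟩, h₂ hab]

theorem glue_injective :
    Function.Injective fun p : SimpleGraph V₁ × SimpleGraph V₂ => glue p.1 p.2 v₁ v₂ := by
  classical
  rintro ⟨F₁, F₂⟩ ⟨F₁', F₂'⟩ h
  dsimp only at h
  refine Prod.ext ?_ ?_ <;> ext a b
  · rw [← glue_adj_inl_inl (F₂ := F₂) (v₁ := v₁) (v₂ := v₂), h, glue_adj_inl_inl]
  · rw [← glue_adj_glueRight (F₁ := F₁) (v₁ := v₁) (v₂ := v₂), h, glue_adj_glueRight]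

theorem exists_glue_eq_of_le_glue {K : SimpleGraph (V₁ ⊕ {x : V₂ // x ≠ v₂})}
    (hK : K ≤ glue H₁ H₂ v₁ v₂) : ∃ F₁ F₂, glue F₁ F₂ v₁ v₂ = K := by
  classical
  refine ⟨K.comap .inl, K.comap (glueRight v₁ v₂), ?_⟩
  ext x y
  rcases x with a | a <;> rcases y with b | b
  · rfl
  · simp only [glue_adj_inl_inr, comap_adj, glueRight_self, glueRight_val]
    exact ⟨fun ⟨ha, h⟩ => ha ▸ h, fun h => ⟨(hK h).1, (hK h).1 ▸ h⟩⟩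
  · simp only [glue_adj_inr_inl, comap_adj, glueRight_self, glueRight_val, K.adj_comm (.inl v₁)]
    exact ⟨fun ⟨hb, h⟩ => hb ▸ h, fun h => ⟨(hK h).1, (hK h).1 ▸ h⟩⟩
  · simp only [glue_adj_inr_inr, comap_adj, glueRight_val]

theorem card_subgraphs_glue {P : SimpleGraph (V₁ ⊕ {x : V₂ // x ≠ v₂}) → Prop}
    (hP : ∀ K, P K → K ≤ glue H₁ H₂ v₁ v₂) :
    Nat.card {K // P K} =
      Nat.card {p : SimpleGraph V₁ × SimpleGraph V₂ // P (glue p.1 p.2 v₁ v₂)} := by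
  let toSubgraph (p : {p : SimpleGraph V₁ × SimpleGraph V₂ // P (glue p.1 p.2 v₁ v₂)}) :
      {K // P K} := ⟨glue p.1.1 p.1.2 v₁ v₂, p.2⟩
  refine (Nat.card_congr (.ofBijective toSubgraph ⟨fun p q h => ?_, fun ⟨K, hK⟩ => ?_⟩)).symm
  · exact Subtype.ext (glue_injective (congrArg Subtype.val h))
  · obtain ⟨F₁, F₂, rfl⟩ := exists_glue_eq_of_le_glue (hP K hK)
    exact ⟨⟨(F₁, F₂), hK⟩, rfl⟩

variable [Finite V₁] [Finite V₂]

theorem card_connectedComponent_glue :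
    Nat.card (glue F₁ F₂ v₁ v₂).ConnectedComponent + 1 =
      Nat.card F₁.ConnectedComponent + Nat.card F₂.ConnectedComponent := by
  classical
  rw [← Nat.card_congr glueConnectedComponentEquiv, Nat.card_sum, add_assoc, ← Finite.card_option,
    Nat.card_congr (Equiv.optionSubtypeNe _)]

theorem isTwoForest_glue_iff :
    IsTwoForest (glue H₁ H₂ v₁ v₂) (glue F₁ F₂ v₁ v₂) ↔
      IsTwoForest H₁ F₁ ∧ F₂ ∈ spanningTrees H₂ ∨ F₁ ∈ spanningTrees H₁ ∧ IsTwoForest H₂ F₂ := by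
  have : Nonempty F₁.ConnectedComponent := ⟨F₁.connectedComponentMk v₁⟩
  have : Nonempty F₂.ConnectedComponent := ⟨F₂.connectedComponentMk v₂⟩
  have hcard := card_connectedComponent_glue (F₁ := F₁) (F₂ := F₂) (v₁ := v₁) (v₂ := v₂)
  have hpos₁ : 0 < Nat.card F₁.ConnectedComponent := Nat.card_pos
  have hpos₂ : 0 < Nat.card F₂.ConnectedComponent := Nat.card_pos
  have hsplit : Nat.card (glue F₁ F₂ v₁ v₂).ConnectedComponent = 2 ↔
      Nat.card F₁.ConnectedComponent = 2 ∧ Nat.card F₂.ConnectedComponent = 1 ∨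
        Nat.card F₁.ConnectedComponent = 1 ∧ Nat.card F₂.ConnectedComponent = 2 := by
    omega
  simp only [IsTwoForest, spanningTrees, Set.mem_ofPred_eq, glue_le_glue_iff, glue_isAcyclic_iff,
    isTree_iff_isAcyclic_and_card_connectedComponent_eq_one, hsplit]
  tauto

theorem fsep_glue_eq_ncard (x y : V₁ ⊕ {x : V₂ // x ≠ v₂}) :
    fsep (glue H₁ H₂ v₁ v₂) x y = {p : SimpleGraph V₁ × SimpleGraph V₂ |
      (IsTwoForest H₁ p.1 ∧ p.2 ∈ spanningTrees H₂ ∨ p.1 ∈ spanningTrees H₁ ∧ IsTwoForest H₂ p.2) ∧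
        ¬(glue p.1 p.2 v₁ v₂).Reachable x y}.ncard := by
  rw [fsep, card_subgraphs_glue fun K hK => hK.1.1]
  simp only [isTwoForest_glue_iff]
  rfl

theorem fsep_glue_inl_inl (i j : V₁) :
    fsep (glue H₁ H₂ v₁ v₂) (.inl i) (.inl j) = tau H₂ * fsep H₁ i j := by
  rw [fsep_glue_eq_ncard, mul_comm, tau_eq_ncard, fsep_eq_ncard, ← Set.ncard_prod]
  congr 1
  ext ⟨F₁, F₂⟩
  have := reachable_of_mem_spanningTrees (T := F₁) (G := H₁) (i := i) (j := j)
  simp only [glue_reachable_inl_inl, separatingTwoForests, Set.mem_prod, Set.mem_ofPred_eq]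
  tauto

theorem fsep_glue_glueRight [DecidableEq V₂] (i j : V₂) :
    fsep (glue H₁ H₂ v₁ v₂) (glueRight v₁ v₂ i) (glueRight v₁ v₂ j) = tau H₁ * fsep H₂ i j := by
  rw [fsep_glue_eq_ncard, tau_eq_ncard, fsep_eq_ncard, ← Set.ncard_prod]
  congr 1
  ext ⟨F₁, F₂⟩
  have := reachable_of_mem_spanningTrees (T := F₂) (G := H₂) (i := i) (j := j)
  simp only [glue_reachable_glueRight, separatingTwoForests, Set.mem_prod, Set.mem_ofPred_eq]
  tauto

theorem fsep_glue_inl_inr (i : V₁) (j : {x : V₂ // x ≠ v₂}) :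
    fsep (glue H₁ H₂ v₁ v₂) (.inl i) (.inr j) = tau H₂ * fsep H₁ i v₁ + tau H₁ * fsep H₂ v₂ j := by
  have hdisj : Disjoint (separatingTwoForests H₁ i v₁ ×ˢ spanningTrees H₂)
      (spanningTrees H₁ ×ˢ separatingTwoForests H₂ v₂ j) :=
    Set.disjoint_left.2 fun _ hp hp' => hp.1.1.notMem_spanningTrees hp'.1
  rw [fsep_glue_eq_ncard, tau_eq_ncard, tau_eq_ncard, fsep_eq_ncard, fsep_eq_ncard, mul_comm,
    ← Set.ncard_prod, ← Set.ncard_prod, ← Set.ncard_union_eq hdisj]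
  congr 1
  ext ⟨F₁, F₂⟩
  have := reachable_of_mem_spanningTrees (T := F₁) (G := H₁) (i := i) (j := v₁)
  have := reachable_of_mem_spanningTrees (T := F₂) (G := H₂) (i := v₂) (j := j)
  simp only [glue_reachable_inl_inr, separatingTwoForests, Set.mem_union, Set.mem_prod,
    Set.mem_ofPred_eq]
  tauto

end Glue

theorem stmt_1_general {V₁ V₂ : Type*} [Fintype V₁] [Fintype V₂] [DecidableEq V₂]
    (H₁ : SimpleGraph V₁) (H₂ : SimpleGraph V₂) (v₁ : V₁) (v₂ : V₂) :
    (∀ i j : V₁, fsep (glue H₁ H₂ v₁ v₂) (.inl i) (.inl j) = tau H₂ * fsep H₁ i j) ∧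
    (∀ i j : V₂, fsep (glue H₁ H₂ v₁ v₂) (glueRight v₁ v₂ i) (glueRight v₁ v₂ j)
        = tau H₁ * fsep H₂ i j) ∧
    (∀ i : V₁, i ≠ v₁ → ∀ j : {x : V₂ // x ≠ v₂},
      fsep (glue H₁ H₂ v₁ v₂) (.inl i) (.inr j)
        = tau H₂ * fsep H₁ i v₁ + tau H₁ * fsep H₂ v₂ j.1) :=
  ⟨fsep_glue_inl_inl, fsep_glue_glueRight, fun i _ => fsep_glue_inl_inr i⟩

/-- the 2-forest counts of the glued graph. -/
theorem stmt_1 {V₁ V₂ : Type*} [Fintype V₁] [Fintype V₂] [DecidableEq V₂]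
    (H₁ : SimpleGraph V₁) (H₂ : SimpleGraph V₂) (h₁ : H₁.Connected) (h₂ : H₂.Connected)
    (v₁ : V₁) (v₂ : V₂) :
    (∀ i j : V₁, fsep (glue H₁ H₂ v₁ v₂) (.inl i) (.inl j) = tau H₂ * fsep H₁ i j) ∧
    (∀ i j : V₂, fsep (glue H₁ H₂ v₁ v₂) (glueRight v₁ v₂ i) (glueRight v₁ v₂ j)
        = tau H₁ * fsep H₂ i j) ∧
    (∀ i : V₁, i ≠ v₁ → ∀ j : {x : V₂ // x ≠ v₂},
      fsep (glue H₁ H₂ v₁ v₂) (.inl i) (.inr j)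
        = tau H₂ * fsep H₁ i v₁ + tau H₁ * fsep H₂ v₂ j.1) :=
  stmt_1_general H₁ H₂ v₁ v₂

end Braess
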